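/- arXiv:1612.07928 — 3 statements merged into one kernel-verified Lean document; each statement's English description precedes it below -/
import Mathlib

section
/- Let g ∈ F_q[X] be monic irreducible of degree n with a root β ∈ F_{q^n} of multiplicative order e, let t = (q^n − 1)/e, and let α be a generator of F_{q^n}^× with α^t = β. For 0 ≤ k < t define the sequence u_k : ℕ → F_q by u_k(j) = Tr_{F_{q^n}/F_q}(α^{k + t·j}). Then each u_k belongs to Ω(g), is nonzero with least period e, the sequences u_0, …, u_{t−1} are pairwise shift inequivalent, and every nonzero sequence in Ω(g) is shift equivalent to exactly one u_k. In particular Ω(g) is the disjoint union of {0} and the t shift-equivalence classes [u_0], …, [u_{t−1}]. -/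
/-!
The map `c ↦ (Tr(c β^j))_j` is `F`-linear and lands in `Ω(g)` because `g(β) = 0`. It is
injective because the trace form is nondegenerate and `β` generates `E = F_{q^n}` over `F`, and
`Ω(g)` has at most `q^n` elements since a sequence in `Ω(g)` is determined by its first `n`
terms; so it is a bijection `E ≃ Ω(g)`. Shifting by `ℓ` multiplies `c` by `β^ℓ`, hence the
least period of the sequence of `c ≠ 0` is `ord β = e`, and the shift classes of nonzero
sequences correspond to the cosets of `⟨β⟩ = ⟨α^t⟩` in `Eˣ`, represented by `α^k`,
`0 ≤ k < t`.
-/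

open Polynomial

/-- The (left) shift operator `L` on sequences over `F`, as an `F`-linear endomorphism. -/
def shiftL (F : Type*) [CommSemiring F] : Module.End F (ℕ → F) where
  toFun s := fun i => s (i + 1)
  map_add' _ _ := rfl
  map_smul' _ _ := rfl

/-- For a polynomial `f`, the operator `f(L)` on sequences. -/
noncomputable def polyL {F : Type*} [CommSemiring F] (f : Polynomial F) :
    Module.End F (ℕ → F) :=
  Polynomial.aeval (shiftL F) f

/-- `Ω(f)`: the set of sequences annihilated by `f(L)`. -/
def OmegaSet {F : Type*} [CommSemiring F] (f : Polynomial F) : Set (ℕ → F) :=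
  {s | polyL f s = 0}

/-- Two sequences are shift equivalent if one is a shift of the other. -/
def ShiftEquiv {F : Type*} [CommSemiring F] (s s' : ℕ → F) : Prop :=
  ∃ ℓ : ℕ, s' = (shiftL F ^ ℓ) s

/-- The cycle (shift-equivalence class) of a sequence. -/
def seqCycle {F : Type*} [CommSemiring F] (s : ℕ → F) : Set (ℕ → F) :=
  {s' | ∃ ℓ : ℕ, s' = (shiftL F ^ ℓ) s}

/-- `N` is the least period of the sequence `s`. -/
def IsLeastPeriod {F : Type*} (s : ℕ → F) (N : ℕ) : Prop :=
  0 < N ∧ (∀ i, s (i + N) = s i) ∧ ∀ M : ℕ, 0 < M → (∀ i, s (i + M) = s i) → N ≤ M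

/-- `h` is the minimal polynomial of the sequence `s`: it is monic, annihilates `s`,
and divides every polynomial annihilating `s`. -/
def IsMinPolyOfSeq {F : Type*} [CommSemiring F] (s : ℕ → F) (h : Polynomial F) : Prop :=
  h.Monic ∧ polyL h s = 0 ∧ ∀ h' : Polynomial F, polyL h' s = 0 → h ∣ h'

/-- `e = ord(f)`: the least `N ≥ 1` with `f ∣ X^N - 1`. -/
def IsOrderOf {F : Type*} [CommRing F] (f : Polynomial F) (e : ℕ) : Prop :=
  0 < e ∧ f ∣ X ^ e - 1 ∧ ∀ N : ℕ, 0 < N → f ∣ X ^ N - 1 → e ≤ N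

section Shift

variable {F : Type*} [CommSemiring F]

theorem shiftL_pow_apply (ℓ : ℕ) (s : ℕ → F) (j : ℕ) :
    ((shiftL F ^ ℓ) s) j = s (j + ℓ) := by
  induction ℓ generalizing s j with
  | zero => rfl
  | succ m ih =>
      rw [pow_succ, Module.End.mul_apply, ih]
      rfl

theorem shiftL_pow_eq_self_iff (ℓ : ℕ) (s : ℕ → F) :
    (shiftL F ^ ℓ) s = s ↔ ∀ i, s (i + ℓ) = s i := by
  simp only [funext_iff, shiftL_pow_apply]

theorem polyL_apply (f : F[X]) (s : ℕ → F) (j : ℕ) :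
    polyL f s j = ∑ i ∈ Finset.range (f.natDegree + 1), f.coeff i • s (j + i) := by
  simp only [polyL, aeval_eq_sum_range, LinearMap.coe_sum, Finset.sum_apply,
    LinearMap.smul_apply, Pi.smul_apply, shiftL_pow_apply]

end Shift

section LinearRecurrence

variable {F : Type*} [CommRing F] {g : F[X]} {s s' : ℕ → F}

theorem Polynomial.Monic.apply_add_natDegree_of_mem_omegaSet (hg : g.Monic)
    (hs : s ∈ OmegaSet g) (j : ℕ) :
    s (j + g.natDegree) = -∑ i ∈ Finset.range g.natDegree, g.coeff i • s (j + i) := by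
  have h := congrFun (hs : polyL g s = 0) j
  rw [polyL_apply, Finset.sum_range_succ, hg.coeff_natDegree, one_smul, Pi.zero_apply] at h
  exact eq_neg_of_add_eq_zero_right h

theorem Polynomial.Monic.eq_of_mem_omegaSet (hg : g.Monic) (hs : s ∈ OmegaSet g)
    (hs' : s' ∈ OmegaSet g) (h : ∀ i < g.natDegree, s i = s' i) : s = s' := by
  funext j
  induction j using Nat.strong_induction_on with
  | _ j ih =>
    rcases lt_or_ge j g.natDegree with hj | hj
    · exact h j hj
    · obtain ⟨m, rfl⟩ := Nat.exists_eq_add_of_le' hj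
      rw [hg.apply_add_natDegree_of_mem_omegaSet hs, hg.apply_add_natDegree_of_mem_omegaSet hs']
      congr 1
      refine Finset.sum_congr rfl fun i hi => ?_
      rw [ih (m + i) (Nat.add_lt_add_left (Finset.mem_range.1 hi) m)]

end LinearRecurrence

section TraceSequence

variable (F : Type*) {E : Type*} [CommRing F] [CommRing E] [Algebra F E]

noncomputable def traceSeq (β : E) : E →ₗ[F] ℕ → F :=
  LinearMap.pi fun j => (Algebra.trace F E).comp (LinearMap.mulRight F (β ^ j))

variable {F}

@[simp]
theorem traceSeq_apply (β c : E) (j : ℕ) :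
    traceSeq F β c j = Algebra.trace F E (c * β ^ j) :=
  rfl

theorem traceSeq_mem_omegaSet {g : F[X]} {β : E} (hβ : aeval β g = 0) (c : E) :
    traceSeq F β c ∈ OmegaSet g := by
  funext j
  have hterm : ∀ i, g.coeff i • traceSeq F β c (j + i) =
      Algebra.trace F E (c * β ^ j * (g.coeff i • β ^ i)) := fun i => by
    rw [traceSeq_apply, mul_smul_comm, map_smul, pow_add, mul_assoc]
  simp only [polyL_apply, hterm, ← map_sum, ← Finset.mul_sum, ← aeval_eq_sum_range, hβ,
    mul_zero, map_zero, Pi.zero_apply]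

theorem shiftL_pow_traceSeq (β c : E) (ℓ : ℕ) :
    (shiftL F ^ ℓ) (traceSeq F β c) = traceSeq F β (c * β ^ ℓ) := by
  funext j
  simp only [shiftL_pow_apply, traceSeq_apply, pow_add, mul_assoc, mul_comm (β ^ j)]

theorem shiftEquiv_traceSeq_iff {β c : E} {s : ℕ → F} :
    ShiftEquiv (traceSeq F β c) s ↔ ∃ ℓ : ℕ, s = traceSeq F β (c * β ^ ℓ) := by
  simp only [ShiftEquiv, shiftL_pow_traceSeq]

theorem exists_traceSeq_eq_of_mem_omegaSet [Finite F] {g : F[X]} {β : E} (hg : g.Monic)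
    (hβ : aeval β g = 0) (hinj : Function.Injective (traceSeq F β))
    (hcard : Nat.card F ^ g.natDegree ≤ Nat.card E)
    {s : ℕ → F} (hs : s ∈ OmegaSet g) : ∃ c, traceSeq F β c = s := by
  let initial : (ℕ → F) → Fin g.natDegree → F := fun s i => s i
  have hinitial : ∀ {s s'}, s ∈ OmegaSet g → s' ∈ OmegaSet g →
      initial s = initial s' → s = s' := fun hs hs' h =>
    hg.eq_of_mem_omegaSet hs hs' fun i hi => congrFun h ⟨i, hi⟩
  have hbij : Function.Bijective (initial ∘ traceSeq F β) :=
    Function.Injective.bijective_of_nat_card_le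
      (fun c c' h =>
        hinj <| hinitial (traceSeq_mem_omegaSet hβ c) (traceSeq_mem_omegaSet hβ c') h)
      (by simpa [Nat.card_fun] using hcard)
  obtain ⟨c, hc⟩ := hbij.surjective (initial s)
  exact ⟨c, hinitial (traceSeq_mem_omegaSet hβ c) hs hc⟩

end TraceSequence

theorem traceSeq_injective {F E : Type*} [Field F] [Field E] [Algebra F E]
    [FiniteDimensional F E] [Algebra.IsSeparable F E] {β : E} (hβ : Algebra.adjoin F {β} = ⊤) :
    Function.Injective (traceSeq F β) := by
  refine (injective_iff_map_eq_zero _).2 fun c hc =>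
    (traceForm_nondegenerate F E).1 c fun x => ?_
  obtain ⟨p, rfl⟩ : x ∈ Set.range (aeval (R := F) β) := by
    rw [← AlgHom.coe_range, ← Algebra.adjoin_singleton_eq_range_aeval, hβ]; trivial
  rw [Algebra.traceForm_apply, aeval_eq_sum_range, Finset.mul_sum, map_sum]
  refine Finset.sum_eq_zero fun i _ => ?_
  rw [mul_smul_comm, map_smul, ← traceSeq_apply, hc, Pi.zero_apply, smul_zero]

theorem isLeastPeriod_traceSeq {F E : Type*} [CommRing F] [Field E] [Algebra F E] {β c : E}
    (hinj : Function.Injective (traceSeq F β)) (hβ : IsOfFinOrder β) (hc : c ≠ 0) :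
    IsLeastPeriod (traceSeq F β c) (orderOf β) := by
  have hperiod : ∀ M, (∀ i, traceSeq F β c (i + M) = traceSeq F β c i) ↔ β ^ M = 1 := by
    intro M
    rw [← shiftL_pow_eq_self_iff, shiftL_pow_traceSeq, hinj.eq_iff, mul_eq_left₀ hc]
  refine ⟨hβ.orderOf_pos, (hperiod _).2 (pow_orderOf_eq_one β), fun M hM hMper => ?_⟩
  exact Nat.le_of_dvd hM (orderOf_dvd_of_pow_eq_one ((hperiod M).1 hMper))

theorem Algebra.adjoin_singleton_eq_top_of_finrank_eq {F E : Type*} [Field F] [Field E]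
    [Algebra F E] [FiniteDimensional F E] {β : E}
    (h : Module.finrank F E = (minpoly F β).natDegree) : Algebra.adjoin F {β} = ⊤ := by
  have hβ : IsIntegral F β := .of_finite F β
  refine (IntermediateField.adjoin_simple_eq_top_iff_of_isAlgebraic hβ.isAlgebraic).1 ?_
  refine IntermediateField.eq_of_le_of_finrank_eq le_top ?_
  rw [IntermediateField.adjoin.finrank hβ, IntermediateField.finrank_top', h]

theorem FiniteField.traceSeq_injective {F E : Type*} [Field F] [Fintype F] [Field E] [Fintype E]
    [Algebra F E] {g : F[X]} (hmonic : g.Monic) (hirr : Irreducible g) {β : E}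
    (hroot : aeval β g = 0) (hcard : Fintype.card E = Fintype.card F ^ g.natDegree) :
    Function.Injective (traceSeq F β) := by
  have hfinrank : Module.finrank F E = g.natDegree :=
    Nat.pow_right_injective (Fintype.one_lt_card (α := F)) <| by
      dsimp only; rw [← Module.card_eq_pow_finrank, hcard]
  refine _root_.traceSeq_injective <| Algebra.adjoin_singleton_eq_top_of_finrank_eq ?_
  rw [← minpoly.eq_of_irreducible_of_monic hirr hroot hmonic, hfinrank]

theorem eq_of_pow_add_mul_eq_pow_add_mul {M : Type*} [Monoid M] {α : M} {t k k' a b : ℕ}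
    (hα : IsOfFinOrder α) (ht : t ∣ orderOf α) (hk : k < t) (hk' : k' < t)
    (h : α ^ (k + t * a) = α ^ (k' + t * b)) : k = k' := by
  have hmod := (hα.pow_eq_pow_iff_modEq.1 h).of_dvd ht
  rwa [Nat.ModEq, Nat.add_mul_mod_self_left, Nat.add_mul_mod_self_left, Nat.mod_eq_of_lt hk,
    Nat.mod_eq_of_lt hk'] at hmod

theorem existsUnique_lt_pow_add_mul_eq {G : Type*} [Group G] [Finite G] {α : G}
    (hα : orderOf α = Nat.card G) {t : ℕ} (ht : t ∣ Nat.card G) (x : G) :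
    ∃! k, k < t ∧ ∃ ℓ : ℕ, α ^ (k + t * ℓ) = x := by
  have htpos : 0 < t := Nat.pos_of_dvd_of_pos ht Nat.card_pos
  have htop : Subgroup.zpowers α = ⊤ :=
    Subgroup.eq_top_of_card_eq _ (by rw [Nat.card_zpowers, hα])
  obtain ⟨r, rfl⟩ := mem_powers_iff_mem_zpowers.2 (htop ▸ Subgroup.mem_top x)
  refine ⟨r % t, ⟨Nat.mod_lt r htpos, r / t, by rw [Nat.mod_add_div]⟩, ?_⟩
  rintro k ⟨hk, ℓ, hkℓ⟩
  rw [← Nat.mod_add_div r t] at hkℓ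
  exact eq_of_pow_add_mul_eq_pow_add_mul (isOfFinOrder_of_finite α) (hα ▸ ht) hk
    (Nat.mod_lt r htpos) hkℓ

theorem stmt4_general {F E : Type*} [Field F] [Fintype F] [Field E] [Fintype E] [Algebra F E]
    (n : ℕ) (hcard : Fintype.card E = Fintype.card F ^ n)
    (g : Polynomial F) (hmonic : g.Monic) (hirr : Irreducible g) (hdeg : g.natDegree = n)
    (β : Eˣ) (hroot : Polynomial.aeval (β : E) g = 0)
    (e : ℕ) (he : e = orderOf β)
    (t : ℕ) (ht : t = (Fintype.card F ^ n - 1) / e)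
    (α : Eˣ) (hα : orderOf α = Fintype.card F ^ n - 1) (hαβ : α ^ t = β)
    (u : ℕ → (ℕ → F))
    (hu : ∀ k j, u k j = Algebra.trace F E ((α : E) ^ (k + t * j))) :
    (∀ k < t, u k ∈ OmegaSet g ∧ u k ≠ 0 ∧ IsLeastPeriod (u k) e) ∧
    (∀ k < t, ∀ k' < t, k ≠ k' → ¬ ShiftEquiv (u k) (u k')) ∧
    (∀ s ∈ OmegaSet g, s ≠ 0 → ∃! k : ℕ, k < t ∧ ShiftEquiv (u k) s) := by
  have hinj : Function.Injective (traceSeq F (β : E)) :=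
    FiniteField.traceSeq_injective hmonic hirr hroot (hdeg ▸ hcard)
  have hαcard : orderOf α = Nat.card Eˣ := by
    rw [hα, Nat.card_units, Nat.card_eq_fintype_card, hcard]
  have htcard : t ∣ Nat.card Eˣ := by
    have he_dvd : e ∣ Nat.card Eˣ := he ▸ orderOf_dvd_natCard β
    rw [← hαcard, hα] at he_dvd ⊢
    exact ht ▸ Nat.div_dvd_of_dvd he_dvd
  have hu_eq : ∀ k, u k = traceSeq F (β : E) ((α ^ k : Eˣ) : E) := fun k => funext fun j => by
    rw [hu, traceSeq_apply, ← hαβ, pow_add, pow_mul]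
    push_cast
    rfl
  have hshift : ∀ k (x : Eˣ),
      ShiftEquiv (u k) (traceSeq F (β : E) x) ↔ ∃ ℓ, α ^ (k + t * ℓ) = x := by
    intro k x
    rw [hu_eq, shiftEquiv_traceSeq_iff]
    refine exists_congr fun ℓ => ?_
    rw [hinj.eq_iff, ← hαβ, ← Units.val_pow_eq_pow_val, ← Units.val_mul, Units.val_inj,
      ← pow_mul, ← pow_add, eq_comm]
  refine ⟨fun k _ => ⟨?_, ?_, ?_⟩, fun k hk k' hk' hne hkk' => ?_, fun s hs hs0 => ?_⟩
  · exact hu_eq k ▸ traceSeq_mem_omegaSet hroot _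
  · rw [hu_eq, Ne, ← map_zero (traceSeq F (β : E)), hinj.eq_iff]
    exact (α ^ k).ne_zero
  · rw [hu_eq, he, ← orderOf_units]
    exact isLeastPeriod_traceSeq hinj (Units.isOfFinOrder_val.2 (isOfFinOrder_of_finite β))
      (α ^ k).ne_zero
  · rw [hu_eq k', hshift] at hkk'
    exact hne <| (existsUnique_lt_pow_add_mul_eq hαcard htcard (α ^ k')).unique ⟨hk, hkk'⟩
      ⟨hk', 0, by rw [mul_zero, add_zero]⟩
  · obtain ⟨c, rfl⟩ := exists_traceSeq_eq_of_mem_omegaSet hmonic hroot hinj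
      (by rw [hdeg, Nat.card_eq_fintype_card, Nat.card_eq_fintype_card, hcard]) hs
    have hc : c ≠ 0 := by rintro rfl; exact hs0 (map_zero _)
    simpa only [← hshift, Units.val_mk0] using
      existsUnique_lt_pow_add_mul_eq hαcard htcard (Units.mk0 c hc)

/-- with `u_k(j) = Tr(α^{k+tj})`, each `u_k` is a nonzero sequence of
`Ω(g)` with least period `e`, the `u_k` (`0 ≤ k < t`) are pairwise shift inequivalent,
and every nonzero sequence of `Ω(g)` is shift equivalent to exactly one `u_k`. -/
theorem stmt4 {F E : Type*} [Field F] [Fintype F] [Field E] [Fintype E] [Algebra F E]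
    (n : ℕ) (hn : 0 < n) (hcard : Fintype.card E = Fintype.card F ^ n)
    (g : Polynomial F) (hmonic : g.Monic) (hirr : Irreducible g) (hdeg : g.natDegree = n)
    (β : Eˣ) (hroot : Polynomial.aeval (β : E) g = 0)
    (e : ℕ) (he : e = orderOf β)
    (t : ℕ) (ht : t = (Fintype.card F ^ n - 1) / e)
    (α : Eˣ) (hα : orderOf α = Fintype.card F ^ n - 1) (hαβ : α ^ t = β)
    (u : ℕ → (ℕ → F))
    (hu : ∀ k j, u k j = Algebra.trace F E ((α : E) ^ (k + t * j))) :
    (∀ k < t, u k ∈ OmegaSet g ∧ u k ≠ 0 ∧ IsLeastPeriod (u k) e) ∧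
    (∀ k < t, ∀ k' < t, k ≠ k' → ¬ ShiftEquiv (u k) (u k')) ∧
    (∀ s ∈ OmegaSet g, s ≠ 0 → ∃! k : ℕ, k < t ∧ ShiftEquiv (u k) s) :=
  stmt4_general n hcard g hmonic hirr hdeg β hroot e he t ht α hα hαβ u hu
end

section
/- Let F_q have characteristic p, let g ∈ F_q[X] be monic irreducible of order e with g(0) ≠ 0, let r = p^d for some integer d ≥ 0, and let s be a sequence with minimal polynomial g^{r+1}. Set s' := (L^e − 1)^r s. Then s' is nonzero with minimal polynomial g, and for every η ∈ {0, 1, …, p − 1} one has L^{η·e·r} s = s + η·s' (the scalar η taken in the prime subfield F_p of F_q). In particular, the p sequences s + η s' for η ∈ {0, …, p − 1} are pairwise shift equivalent. -/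
open Polynomial

/-! By minimality of `e` and the Frobenius identity `X^(p e') - 1 = (X^e' - 1)^p`, the order `e`
is prime to `p`, so `X^e - 1 = g u` is separable and `u` is coprime to `g`. Since
`(X^e - 1)^r = g^r u^r`, applying it to `s` divides `g^r` out of the minimal polynomial `g^(r+1)`
and leaves `g` for `s'`. Again by Frobenius `(X^e - 1)^r = X^(e r) - 1`, so `L^(e r) s = s + s'`,
while `L^(e r)` fixes `s'` because `g ∣ X^(e r) - 1`. Iterating, `L^(n e r) s = s + n s'`, and as
`p s' = 0` the sequences `s + η s'` form a single orbit. -/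

section Polynomial

variable {F : Type*}

theorem polyL_mul_apply [CommSemiring F] (a b : F[X]) (t : ℕ → F) :
    polyL (a * b) t = polyL a (polyL b t) := by
  simp only [polyL, map_mul, Module.End.mul_apply]

theorem polyL_X_pow_sub_one [CommRing F] (n : ℕ) :
    polyL (X ^ n - 1 : F[X]) = shiftL F ^ n - 1 := by
  simp only [polyL, map_sub, map_pow, aeval_X, map_one]

theorem polyL_X_pow_sub_one_pow [CommRing F] (n k : ℕ) :
    polyL ((X ^ n - 1 : F[X]) ^ k) = (shiftL F ^ n - 1) ^ k := by
  rw [polyL, map_pow]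
  exact congrArg (· ^ k) (polyL_X_pow_sub_one n)

theorem IsOrderOf.not_char_dvd [Field F] {p : ℕ} [Fact p.Prime] [CharP F p] {g : F[X]} {e : ℕ}
    (hg : Irreducible g) (he : IsOrderOf g e) : ¬ p ∣ e := by
  rintro ⟨e', rfl⟩
  have he' : 0 < e' := Nat.pos_of_mul_pos_left he.1
  have hfrob : (X : F[X]) ^ (p * e') - 1 = (X ^ e' - 1) ^ p := by
    rw [sub_pow_char, one_pow, ← pow_mul, mul_comm]
  have hdvd : g ∣ X ^ e' - 1 := hg.prime.dvd_of_dvd_pow (hfrob ▸ he.2.1)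
  have hle : p * e' ≤ e' := he.2.2 e' he' hdvd
  have hp2 : 2 ≤ p := (Fact.out : p.Prime).two_le
  nlinarith

theorem isCoprime_of_X_pow_sub_one_eq_mul [Field F] {p : ℕ} [CharP F p] {n : ℕ} (hn : ¬ p ∣ n)
    {g u : F[X]} (hg : Irreducible g) (h : X ^ n - 1 = g * u) : IsCoprime g u := by
  rw [hg.coprime_iff_not_dvd]
  rintro ⟨w, rfl⟩
  have hsep : (X ^ n - 1 : F[X]).Separable := by
    simpa using separable_X_pow_sub_C' p n (1 : F) hn one_ne_zero
  exact hg.not_isUnit (hsep.squarefree g ⟨w, by rw [h, mul_assoc]⟩)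

end Polynomial

namespace IsMinPolyOfSeq

variable {F : Type*} {s : ℕ → F}

theorem polyL_apply_eq_zero_iff [CommSemiring F] {h : F[X]} (hs : IsMinPolyOfSeq s h) (f : F[X]) :
    polyL f s = 0 ↔ h ∣ f := by
  refine ⟨hs.2.2 f, ?_⟩
  rintro ⟨w, rfl⟩
  rw [mul_comm, polyL_mul_apply, hs.2.1, map_zero]

theorem ne_zero [CommSemiring F] {h : F[X]} (hs : IsMinPolyOfSeq s h) (hh : ¬ IsUnit h) :
    s ≠ 0 := by
  rintro rfl
  exact hh (isUnit_of_dvd_one (hs.2.2 1 (map_zero _)))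

theorem shiftL_pow_apply [CommRing F] {h : F[X]} (hs : IsMinPolyOfSeq s h) {n : ℕ}
    (hn : h ∣ X ^ n - 1) :
    (shiftL F ^ n) s = s := by
  have := (hs.polyL_apply_eq_zero_iff _).2 hn
  rwa [polyL_X_pow_sub_one, LinearMap.sub_apply, Module.End.one_apply, sub_eq_zero] at this

theorem polyL_mul [CommRing F] [IsDomain F] {m c v : F[X]} (hs : IsMinPolyOfSeq s (m * c))
    (hm : m.Monic) (hmv : IsCoprime m v) : IsMinPolyOfSeq (polyL (c * v) s) m := by
  have hc : c ≠ 0 := right_ne_zero_of_mul hs.1.ne_zero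
  refine ⟨hm, ?_, fun h' hh' => ?_⟩
  · rw [← polyL_mul_apply, ← mul_assoc, hs.polyL_apply_eq_zero_iff]
    exact dvd_mul_right _ _
  · rw [← polyL_mul_apply, hs.polyL_apply_eq_zero_iff,
      show h' * (c * v) = h' * v * c by ring, mul_dvd_mul_iff_right hc] at hh'
    exact hmv.dvd_of_dvd_mul_right hh'

end IsMinPolyOfSeq

theorem Module.End.pow_apply_add_nsmul {R M : Type*} [Semiring R] [AddCommMonoid M] [Module R M]
    {T : Module.End R M} {t t' : M} (ht' : T t' = t') (ht : T t = t + t') (n m : ℕ) :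
    (T ^ n) (t + m • t') = t + (m + n) • t' := by
  induction n with
  | zero => simp
  | succ n ih =>
    rw [pow_succ', Module.End.mul_apply, ih, map_add, map_nsmul, ht, ht', add_assoc,
      ← succ_nsmul', ← add_assoc]

theorem stmt10_general {F : Type*} [Field F] (p : ℕ) (hp : p.Prime) [CharP F p]
    (g : Polynomial F) (hmonic : g.Monic) (hirr : Irreducible g)
    (e : ℕ) (he : IsOrderOf g e)
    (d r : ℕ) (hr : r = p ^ d)
    (s : ℕ → F) (hs : IsMinPolyOfSeq s (g ^ (r + 1)))
    (s' : ℕ → F) (hs' : s' = ((shiftL F ^ e - 1) ^ r) s) :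
    s' ≠ 0 ∧ IsMinPolyOfSeq s' g ∧
    (∀ η : ℕ, η < p → (shiftL F ^ (η * e * r)) s = s + (η : F) • s') ∧
    (∀ η₁ : ℕ, η₁ < p → ∀ η₂ : ℕ, η₂ < p →
      ShiftEquiv (s + (η₁ : F) • s') (s + (η₂ : F) • s')) := by
  have := Fact.mk hp
  obtain ⟨u, hu⟩ := he.2.1
  have hfrob : ((X : F[X]) ^ e - 1) ^ r = X ^ (e * r) - 1 := by
    rw [hr, sub_pow_char_pow, one_pow, ← pow_mul]
  have hmin : IsMinPolyOfSeq s' g := by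
    have hs'u : s' = polyL (g ^ r * u ^ r) s := by
      rw [hs', ← polyL_X_pow_sub_one_pow, hu, mul_pow]
    rw [hs'u]
    refine (pow_succ' g r ▸ hs).polyL_mul hmonic (IsCoprime.pow_right ?_)
    exact isCoprime_of_X_pow_sub_one_eq_mul (he.not_char_dvd hirr) hirr hu
  have hfix : (shiftL F ^ (e * r)) s' = s' := by
    refine hmin.shiftL_pow_apply (he.2.1.trans (hfrob ▸ dvd_pow_self _ ?_))
    exact hr ▸ (pow_pos hp.pos d).ne'
  have hstep : (shiftL F ^ (e * r)) s = s + s' := by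
    rw [hs', ← polyL_X_pow_sub_one_pow, hfrob, polyL_X_pow_sub_one, LinearMap.sub_apply,
      Module.End.one_apply, add_sub_cancel]
  have hiter (n m : ℕ) : (shiftL F ^ (e * r * n)) (s + m • s') = s + (m + n) • s' := by
    rw [pow_mul, Module.End.pow_apply_add_nsmul hfix hstep]
  simp only [← Nat.cast_smul_eq_nsmul F] at hiter
  refine ⟨hmin.ne_zero hirr.not_isUnit, hmin, fun η _ => ?_, fun η₁ h₁ η₂ _ => ?_⟩
  · simpa [mul_comm, mul_left_comm] using hiter η 0
  · refine ⟨e * r * (η₂ + (p - η₁)), ?_⟩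
    rw [hiter, show η₁ + (η₂ + (p - η₁)) = η₂ + p by omega, Nat.cast_add, CharP.cast_eq_zero F p,
      add_zero]

/-- let `r = p^d`, `s` have minimal polynomial `g^{r+1}` and
`s' = (L^e − 1)^r s` where `e = ord(g)`. Then `s'` is nonzero with minimal polynomial `g`,
`L^{η·e·r} s = s + η·s'` for `0 ≤ η < p`, and the `p` sequences `s + η s'` are pairwise
shift equivalent. -/
theorem stmt10 {F : Type*} [Field F] [Fintype F] (p : ℕ) (hp : p.Prime) [CharP F p]
    (g : Polynomial F) (hmonic : g.Monic) (hirr : Irreducible g) (hg0 : g.coeff 0 ≠ 0)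
    (e : ℕ) (he : IsOrderOf g e)
    (d r : ℕ) (hr : r = p ^ d)
    (s : ℕ → F) (hs : IsMinPolyOfSeq s (g ^ (r + 1)))
    (s' : ℕ → F) (hs' : s' = ((shiftL F ^ e - 1) ^ r) s) :
    s' ≠ 0 ∧ IsMinPolyOfSeq s' g ∧
    (∀ η : ℕ, η < p → (shiftL F ^ (η * e * r)) s = s + (η : F) • s') ∧
    (∀ η₁ : ℕ, η₁ < p → ∀ η₂ : ℕ, η₂ < p →
      ShiftEquiv (s + (η₁ : F) • s') (s + (η₂ : F) • s')) :=
  stmt10_general p hp g hmonic hirr e he d r hr s hs s' hs'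
end

section
/- Let g_1 ≠ g_2 be distinct monic irreducible polynomials in F_q[X] with nonzero constant terms, let b_1, b_2 ≥ 1, and let u_1 ∈ Ω(g_1^{b_1}) be nonzero with least period e_1 and u_2 ∈ Ω(g_2^{b_2}) be nonzero with least period e_2. Then each of the sequences L^{ℓ_1} u_1 + L^{ℓ_2} u_2 has least period lcm(e_1, e_2); the e_1·e_2 sequences obtained for 0 ≤ ℓ_1 < e_1 and 0 ≤ ℓ_2 < e_2 are pairwise distinct; and they partition into exactly gcd(e_1, e_2) shift-equivalence classes, with the gcd(e_1, e_2) sequences u_1 + L^{ℓ} u_2 for 0 ≤ ℓ < gcd(e_1, e_2) forming a complete set of pairwise shift-inequivalent representatives. -/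
open Polynomial

section Aux
variable {F : Type*}

lemma shift_pow_apply [CommSemiring F] (s : ℕ → F) (k i : ℕ) :
    ((shiftL F ^ k) s) i = s (i + k) := by
  induction k generalizing s i with
  | zero => rfl
  | succ n ih =>
    rw [pow_succ, Module.End.mul_apply, ih]
    rfl

lemma polyL_mul [CommSemiring F] (f h : Polynomial F) (s : ℕ → F) :
    polyL (f * h) s = polyL f (polyL h s) := by
  unfold polyL; rw [map_mul]; rfl

lemma polyL_X_pow [CommSemiring F] (n : ℕ) (s : ℕ → F) :
    polyL (X ^ n : Polynomial F) s = (shiftL F ^ n) s := by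
  unfold polyL; rw [map_pow, aeval_X]

lemma polyL_one_eq [CommSemiring F] (s : ℕ → F) : polyL (1 : Polynomial F) s = s := by
  unfold polyL; rw [map_one]; rfl

lemma polyL_add' [CommSemiring F] (f h : Polynomial F) (s : ℕ → F) :
    polyL (f + h) s = polyL f s + polyL h s := by
  unfold polyL; rw [map_add]; rfl

lemma polyL_shift [CommSemiring F] (h : Polynomial F) (ℓ : ℕ) (s : ℕ → F) :
    polyL h ((shiftL F ^ ℓ) s) = (shiftL F ^ ℓ) (polyL h s) := by
  rw [← polyL_X_pow, ← polyL_mul, mul_comm, polyL_mul, polyL_X_pow]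

lemma polyL_X_pow_sub_one_s13 [CommRing F] (N : ℕ) (s : ℕ → F) :
    polyL (X ^ N - 1 : Polynomial F) s = 0 ↔ ∀ i, s (i + N) = s i := by
  unfold polyL
  rw [map_sub, map_one, map_pow, aeval_X]
  constructor
  · intro h i
    have := congrFun (congrArg (fun t : ℕ → F => t) h) i
    have h2 : ((shiftL F ^ N) s) i - s i = 0 := by
      simpa [LinearMap.sub_apply, Module.End.one_apply] using congrFun h i
    rw [shift_pow_apply] at h2
    exact sub_eq_zero.mp h2
  · intro h
    funext i
    simp [LinearMap.sub_apply, Module.End.one_apply, shift_pow_apply, h i]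

lemma ann_zero [CommSemiring F] {h₁ h₂ : Polynomial F} (hco : IsCoprime h₁ h₂)
    {t : ℕ → F} (h1 : polyL h₁ t = 0) (h2 : polyL h₂ t = 0) : t = 0 := by
  obtain ⟨α, β, hab⟩ := hco
  have h : polyL (α * h₁ + β * h₂) t = t := by rw [hab, polyL_one_eq]
  rw [polyL_add', polyL_mul, polyL_mul, h1, h2, map_zero, map_zero, add_zero] at h
  exact h.symm

lemma split_unique [CommRing F] {h₁ h₂ : Polynomial F} (hco : IsCoprime h₁ h₂)
    {a a' b b' : ℕ → F} (ha : polyL h₁ a = 0) (ha' : polyL h₁ a' = 0)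
    (hb : polyL h₂ b = 0) (hb' : polyL h₂ b' = 0) (heq : a + b = a' + b') :
    a = a' ∧ b = b' := by
  have hd : a - a' = b' - b := by
    have := heq
    funext i
    have := congrFun heq i
    simp only [Pi.add_apply] at this
    simp only [Pi.sub_apply]
    linear_combination this
  have ht1 : polyL h₁ (a - a') = 0 := by rw [map_sub, ha, ha', sub_zero]
  have ht2 : polyL h₂ (a - a') = 0 := by rw [hd, map_sub, hb', hb, sub_zero]
  have h0 : a = a' := sub_eq_zero.mp (ann_zero hco ht1 ht2)
  refine ⟨h0, ?_⟩
  rw [h0] at heq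
  exact add_left_cancel heq

lemma separation [CommRing F] {h₁ h₂ : Polynomial F} (hco : IsCoprime h₁ h₂)
    {a b : ℕ → F} (ha : polyL h₁ a = 0) (hb : polyL h₂ b = 0)
    {f : Polynomial F} (hf : polyL f (a + b) = 0) :
    polyL f a = 0 ∧ polyL f b = 0 := by
  have hsum : polyL f a + polyL f b = 0 := by rw [← map_add, hf]
  have h1 : polyL h₁ (polyL f a) = 0 := by
    rw [← polyL_mul, mul_comm, polyL_mul, ha, map_zero]
  have h2 : polyL h₂ (polyL f a) = 0 := by
    have hfa : polyL f a = -polyL f b := eq_neg_of_add_eq_zero_left hsum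
    rw [hfa, map_neg, ← polyL_mul, mul_comm, polyL_mul, hb, map_zero, neg_zero]
  have h0 := ann_zero hco h1 h2
  exact ⟨h0, by rwa [h0, zero_add] at hsum⟩

lemma per_mul {s : ℕ → F} {e : ℕ} (h : ∀ i, s (i + e) = s i) (q i : ℕ) :
    s (i + q * e) = s i := by
  induction q with
  | zero => simp
  | succ n ih =>
    have h2 : i + (n + 1) * e = i + n * e + e := by ring
    rw [h2, h, ih]

lemma per_dvd {s : ℕ → F} {e M : ℕ} (h : ∀ i, s (i + e) = s i) (hd : e ∣ M) :
    ∀ i, s (i + M) = s i := by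
  obtain ⟨q, rfl⟩ := hd
  intro i
  rw [mul_comm]
  exact per_mul h q i

lemma least_dvd {s : ℕ → F} {e M : ℕ} (hp : IsLeastPeriod s e)
    (h : ∀ i, s (i + M) = s i) : e ∣ M := by
  obtain ⟨he, hper, hmin⟩ := hp
  have hr : ∀ i, s (i + M % e) = s i := by
    intro i
    have h1 : s (i + M % e + M / e * e) = s (i + M % e) := per_mul hper _ _
    have h2 : i + M % e + M / e * e = i + M := by
      rw [Nat.add_assoc, Nat.mod_add_div']
    rw [h2] at h1
    exact h1.symm.trans (h i)
  rcases Nat.eq_zero_or_pos (M % e) with h0 | h0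
  · exact Nat.dvd_of_mod_eq_zero h0
  · have := hmin (M % e) h0 hr
    have := Nat.mod_lt M he
    omega

lemma per_of_shift_per {s : ℕ → F} {e ℓ M : ℕ} (hper : ∀ i, s (i + e) = s i)
    (he : 0 < e) (h : ∀ i, s (i + ℓ + M) = s (i + ℓ)) : ∀ j, s (j + M) = s j := by
  intro j
  have hle : ℓ ≤ ℓ * e := Nat.le_mul_of_pos_right ℓ he
  have k1 : s (j + M + ℓ * e) = s (j + M) := per_mul hper ℓ _
  have k4 : s (j + ℓ * e) = s j := per_mul hper ℓ j
  set P := ℓ * e with hP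
  set i := j + P - ℓ with hi
  have hiℓ : i + ℓ = j + P := by omega
  have k2 : j + M + P = i + ℓ + M := by omega
  have k3 := h i
  rw [k2, k3, hiℓ, k4] at k1
  exact k1.symm

lemma isLeastPeriod_shift [CommSemiring F] {s : ℕ → F} {e : ℕ}
    (hp : IsLeastPeriod s e) (ℓ : ℕ) : IsLeastPeriod ((shiftL F ^ ℓ) s) e := by
  obtain ⟨he, hper, hmin⟩ := hp
  refine ⟨he, ?_, ?_⟩
  · intro i
    rw [shift_pow_apply, shift_pow_apply]
    have h2 : i + e + ℓ = i + ℓ + e := by ring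
    rw [h2, hper]
  · intro M hM hMper
    apply hmin M hM
    apply per_of_shift_per hper he (ℓ := ℓ)
    intro i
    have := hMper i
    rw [shift_pow_apply, shift_pow_apply] at this
    have h2 : i + M + ℓ = i + ℓ + M := by ring
    rw [h2] at this
    exact this

lemma shift_eq_of_modEq_le [CommSemiring F] {s : ℕ → F} {e : ℕ}
    (hper : ∀ i, s (i + e) = s i) {a b : ℕ} (hab : a ≤ b) (h : a ≡ b [MOD e]) :
    (shiftL F ^ a) s = (shiftL F ^ b) s := by
  funext i
  rw [shift_pow_apply, shift_pow_apply]
  have hd : e ∣ b - a := (Nat.modEq_iff_dvd' hab).mp h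
  have := per_dvd hper hd (i + a)
  rw [show i + a + (b - a) = i + b by omega] at this
  exact this.symm

lemma shift_eq_of_modEq [CommSemiring F] {s : ℕ → F} {e : ℕ}
    (hper : ∀ i, s (i + e) = s i) {a b : ℕ} (h : a ≡ b [MOD e]) :
    (shiftL F ^ a) s = (shiftL F ^ b) s := by
  rcases le_total a b with hab | hab
  · exact shift_eq_of_modEq_le hper hab h
  · exact (shift_eq_of_modEq_le hper hab h.symm).symm

lemma modEq_of_shift_eq_le [CommSemiring F] {s : ℕ → F} {e : ℕ}
    (hp : IsLeastPeriod s e) {a b : ℕ} (hab : a ≤ b)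
    (h : (shiftL F ^ a) s = (shiftL F ^ b) s) : a ≡ b [MOD e] := by
  refine (Nat.modEq_iff_dvd' hab).mpr ?_
  apply least_dvd hp
  apply per_of_shift_per hp.2.1 hp.1 (ℓ := a)
  intro i
  have := congrFun h i
  rw [shift_pow_apply, shift_pow_apply] at this
  rw [show i + a + (b - a) = i + b by omega]
  exact this.symm

lemma modEq_of_shift_eq [CommSemiring F] {s : ℕ → F} {e : ℕ}
    (hp : IsLeastPeriod s e) {a b : ℕ}
    (h : (shiftL F ^ a) s = (shiftL F ^ b) s) : a ≡ b [MOD e] := by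
  rcases le_total a b with hab | hab
  · exact modEq_of_shift_eq_le hp hab h
  · exact (modEq_of_shift_eq_le hp hab h.symm).symm




lemma seqCycle_shift [CommSemiring F] {s : ℕ → F} {N : ℕ} (hN : 0 < N)
    (hper : ∀ i, s (i + N) = s i) (k : ℕ) :
    seqCycle ((shiftL F ^ k) s) = seqCycle s := by
  ext t
  constructor
  · rintro ⟨j, rfl⟩
    exact ⟨j + k, by rw [← Module.End.mul_apply, ← pow_add]⟩
  · rintro ⟨j, rfl⟩
    refine ⟨j + k * (N - 1), ?_⟩
    have h1 : (shiftL F ^ (j + k * (N - 1))) ((shiftL F ^ k) s)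
        = (shiftL F ^ (j + k * N)) s := by
      have hN1 : N - 1 + 1 = N := Nat.succ_pred_eq_of_pos hN
      have hexp : j + k * (N - 1) + k = j + k * N := by
        calc j + k * (N - 1) + k = j + k * (N - 1 + 1) := by ring
          _ = j + k * N := by rw [hN1]
      rw [← Module.End.mul_apply, ← pow_add, hexp]
    have h2 : (shiftL F ^ (j + k * N)) s = (shiftL F ^ j) s := by
      funext i
      rw [shift_pow_apply, shift_pow_apply]
      have h3 : i + (j + k * N) = i + j + k * N := by ring
      rw [h3]
      exact per_mul hper k (i + j)
    rw [h1, h2]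

end Aux

/-- for nonzero `u₁ ∈ Ω(g₁^{b₁})` and `u₂ ∈ Ω(g₂^{b₂})` of least periods
`e₁, e₂`: every `L^{ℓ₁}u₁ + L^{ℓ₂}u₂` has least period `lcm(e₁,e₂)`; the `e₁e₂` such
sequences (`ℓ₁ < e₁`, `ℓ₂ < e₂`) are pairwise distinct; and they form exactly
`gcd(e₁,e₂)` cycles, with `u₁ + L^ℓ u₂` for `ℓ < gcd(e₁,e₂)` a complete set of pairwise
shift-inequivalent representatives. -/
theorem stmt13 {F : Type*} [Field F] [Fintype F]
    (g₁ g₂ : Polynomial F) (hm₁ : g₁.Monic) (hm₂ : g₂.Monic)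
    (hirr₁ : Irreducible g₁) (hirr₂ : Irreducible g₂)
    (hg₁0 : g₁.coeff 0 ≠ 0) (hg₂0 : g₂.coeff 0 ≠ 0) (hne : g₁ ≠ g₂)
    (b₁ b₂ : ℕ) (hb₁ : 1 ≤ b₁) (hb₂ : 1 ≤ b₂)
    (u₁ u₂ : ℕ → F)
    (hu₁ : u₁ ∈ OmegaSet (g₁ ^ b₁)) (hu₂ : u₂ ∈ OmegaSet (g₂ ^ b₂))
    (hu₁ne : u₁ ≠ 0) (hu₂ne : u₂ ≠ 0)
    (e₁ e₂ : ℕ) (hp₁ : IsLeastPeriod u₁ e₁) (hp₂ : IsLeastPeriod u₂ e₂) :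
    (∀ ℓ₁ ℓ₂ : ℕ,
      IsLeastPeriod ((shiftL F ^ ℓ₁) u₁ + (shiftL F ^ ℓ₂) u₂) (Nat.lcm e₁ e₂)) ∧
    (∀ ℓ₁ < e₁, ∀ ℓ₂ < e₂, ∀ ℓ₁' < e₁, ∀ ℓ₂' < e₂,
      (shiftL F ^ ℓ₁) u₁ + (shiftL F ^ ℓ₂) u₂
        = (shiftL F ^ ℓ₁') u₁ + (shiftL F ^ ℓ₂') u₂ →
      ℓ₁ = ℓ₁' ∧ ℓ₂ = ℓ₂') ∧
    (∀ ℓ < Nat.gcd e₁ e₂, ∀ ℓ' < Nat.gcd e₁ e₂, ℓ ≠ ℓ' →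
      ¬ ShiftEquiv (u₁ + (shiftL F ^ ℓ) u₂) (u₁ + (shiftL F ^ ℓ') u₂)) ∧
    (∀ ℓ₁ ℓ₂ : ℕ, ∃ ℓ < Nat.gcd e₁ e₂,
      ShiftEquiv (u₁ + (shiftL F ^ ℓ) u₂) ((shiftL F ^ ℓ₁) u₁ + (shiftL F ^ ℓ₂) u₂)) ∧
    {C : Set (ℕ → F) | ∃ ℓ₁ < e₁, ∃ ℓ₂ < e₂,
        C = seqCycle ((shiftL F ^ ℓ₁) u₁ + (shiftL F ^ ℓ₂) u₂)}.ncard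
      = Nat.gcd e₁ e₂ := by
  have he₁ : 0 < e₁ := hp₁.1
  have he₂ : 0 < e₂ := hp₂.1
  have hg : 0 < Nat.gcd e₁ e₂ := Nat.gcd_pos_of_pos_left e₂ he₁
  have hA₁ : polyL (g₁ ^ b₁) u₁ = 0 := hu₁
  have hA₂ : polyL (g₂ ^ b₂) u₂ = 0 := hu₂
  have hcop : IsCoprime (g₁ ^ b₁) (g₂ ^ b₂) := by
    have h12 : IsCoprime g₁ g₂ := by
      rw [Irreducible.coprime_iff_not_dvd hirr₁]
      intro hdvd
      exact hne (Polynomial.eq_of_monic_of_associated hm₁ hm₂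
        (hirr₁.associated_of_dvd hirr₂ hdvd))
    exact IsCoprime.pow h12
  have hA₁' : ∀ ℓ, polyL (g₁ ^ b₁) ((shiftL F ^ ℓ) u₁) = 0 := fun ℓ => by
    rw [polyL_shift, hA₁, map_zero]
  have hA₂' : ∀ ℓ, polyL (g₂ ^ b₂) ((shiftL F ^ ℓ) u₂) = 0 := fun ℓ => by
    rw [polyL_shift, hA₂, map_zero]
  -- Part 1
  have P1 : ∀ ℓ₁ ℓ₂ : ℕ,
      IsLeastPeriod ((shiftL F ^ ℓ₁) u₁ + (shiftL F ^ ℓ₂) u₂) (Nat.lcm e₁ e₂) := by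
    intro ℓ₁ ℓ₂
    have hpa : IsLeastPeriod ((shiftL F ^ ℓ₁) u₁) e₁ := isLeastPeriod_shift hp₁ ℓ₁
    have hpb : IsLeastPeriod ((shiftL F ^ ℓ₂) u₂) e₂ := isLeastPeriod_shift hp₂ ℓ₂
    refine ⟨Nat.lcm_pos he₁ he₂, ?_, ?_⟩
    · intro i
      have h1 := per_dvd hpa.2.1 (Nat.dvd_lcm_left e₁ e₂) i
      have h2 := per_dvd hpb.2.1 (Nat.dvd_lcm_right e₁ e₂) i
      simp only [Pi.add_apply, h1, h2]
    · intro M hM hMper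
      have hz : polyL (X ^ M - 1 : Polynomial F)
          ((shiftL F ^ ℓ₁) u₁ + (shiftL F ^ ℓ₂) u₂) = 0 :=
        (polyL_X_pow_sub_one_s13 M _).mpr hMper
      obtain ⟨hza, hzb⟩ := separation hcop (hA₁' ℓ₁) (hA₂' ℓ₂) hz
      have d1 : e₁ ∣ M := least_dvd hpa ((polyL_X_pow_sub_one_s13 M _).mp hza)
      have d2 : e₂ ∣ M := least_dvd hpb ((polyL_X_pow_sub_one_s13 M _).mp hzb)
      exact Nat.le_of_dvd hM (Nat.lcm_dvd d1 d2)
  -- Part 2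
  have P2 : ∀ ℓ₁ < e₁, ∀ ℓ₂ < e₂, ∀ ℓ₁' < e₁, ∀ ℓ₂' < e₂,
      (shiftL F ^ ℓ₁) u₁ + (shiftL F ^ ℓ₂) u₂
        = (shiftL F ^ ℓ₁') u₁ + (shiftL F ^ ℓ₂') u₂ →
      ℓ₁ = ℓ₁' ∧ ℓ₂ = ℓ₂' := by
    intro ℓ₁ h1 ℓ₂ h2 ℓ₁' h1' ℓ₂' h2' heq
    obtain ⟨ea, eb⟩ := split_unique hcop (hA₁' ℓ₁) (hA₁' ℓ₁') (hA₂' ℓ₂) (hA₂' ℓ₂') heq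
    have m1 := modEq_of_shift_eq hp₁ ea
    have m2 := modEq_of_shift_eq hp₂ eb
    unfold Nat.ModEq at m1 m2
    rw [Nat.mod_eq_of_lt h1, Nat.mod_eq_of_lt h1'] at m1
    rw [Nat.mod_eq_of_lt h2, Nat.mod_eq_of_lt h2'] at m2
    exact ⟨m1, m2⟩
  -- Part 3
  have P3 : ∀ ℓ < Nat.gcd e₁ e₂, ∀ ℓ' < Nat.gcd e₁ e₂, ℓ ≠ ℓ' →
      ¬ ShiftEquiv (u₁ + (shiftL F ^ ℓ) u₂) (u₁ + (shiftL F ^ ℓ') u₂) := by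
    intro ℓ hℓ ℓ' hℓ' hne' hSE
    obtain ⟨k, hk⟩ := hSE
    have hk' : (shiftL F ^ 0) u₁ + (shiftL F ^ ℓ') u₂
        = (shiftL F ^ k) u₁ + (shiftL F ^ (k + ℓ)) u₂ := by
      rw [pow_zero, Module.End.one_apply, hk, map_add, ← Module.End.mul_apply, ← pow_add]
    obtain ⟨ea, eb⟩ := split_unique hcop (hA₁' 0) (hA₁' k) (hA₂' ℓ') (hA₂' (k + ℓ)) hk'
    have m1 : 0 ≡ k [MOD e₁] := modEq_of_shift_eq hp₁ ea
    have m2 : ℓ' ≡ k + ℓ [MOD e₂] := modEq_of_shift_eq hp₂ eb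
    have m1' : 0 ≡ k [MOD Nat.gcd e₁ e₂] :=
      Nat.ModEq.of_dvd (Nat.gcd_dvd_left e₁ e₂) m1
    have m2' : ℓ' ≡ k + ℓ [MOD Nat.gcd e₁ e₂] :=
      Nat.ModEq.of_dvd (Nat.gcd_dvd_right e₁ e₂) m2
    have m3 : k + ℓ ≡ 0 + ℓ [MOD Nat.gcd e₁ e₂] := Nat.ModEq.add_right ℓ m1'.symm
    have m4 := m2'.trans m3
    rw [Nat.zero_add] at m4
    unfold Nat.ModEq at m4
    rw [Nat.mod_eq_of_lt hℓ', Nat.mod_eq_of_lt hℓ] at m4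
    exact hne' m4.symm
  -- Part 4
  have P4 : ∀ ℓ₁ ℓ₂ : ℕ, ∃ ℓ < Nat.gcd e₁ e₂,
      ShiftEquiv (u₁ + (shiftL F ^ ℓ) u₂) ((shiftL F ^ ℓ₁) u₁ + (shiftL F ^ ℓ₂) u₂) := by
    intro ℓ₁ ℓ₂
    set ℓ := (ℓ₂ + ℓ₁ * (Nat.gcd e₁ e₂ - 1)) % Nat.gcd e₁ e₂ with hℓdef
    have hℓ : ℓ < Nat.gcd e₁ e₂ := Nat.mod_lt _ hg
    have hmul1 : ℓ₁ * (Nat.gcd e₁ e₂ - 1) + ℓ₁ = ℓ₁ * Nat.gcd e₁ e₂ := by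
      have h1 : Nat.gcd e₁ e₂ - 1 + 1 = Nat.gcd e₁ e₂ := Nat.succ_pred_eq_of_pos hg
      calc ℓ₁ * (Nat.gcd e₁ e₂ - 1) + ℓ₁ = ℓ₁ * (Nat.gcd e₁ e₂ - 1 + 1) := by ring
        _ = ℓ₁ * Nat.gcd e₁ e₂ := by rw [h1]
    have c1 : ℓ + ℓ₁ ≡ ℓ₂ [MOD Nat.gcd e₁ e₂] := by
      show (ℓ + ℓ₁) % Nat.gcd e₁ e₂ = ℓ₂ % Nat.gcd e₁ e₂
      rw [hℓdef]
      calc ((ℓ₂ + ℓ₁ * (Nat.gcd e₁ e₂ - 1)) % Nat.gcd e₁ e₂ + ℓ₁) % Nat.gcd e₁ e₂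
          = (ℓ₂ + ℓ₁ * (Nat.gcd e₁ e₂ - 1) + ℓ₁) % Nat.gcd e₁ e₂ := by
            rw [Nat.mod_add_mod]
        _ = (ℓ₂ + ℓ₁ * Nat.gcd e₁ e₂) % Nat.gcd e₁ e₂ := by
            rw [Nat.add_assoc, hmul1]
        _ = ℓ₂ % Nat.gcd e₁ e₂ := by rw [Nat.add_mul_mod_self_right]
    have hmul2 : ℓ * (e₂ - 1) + ℓ = ℓ * e₂ := by
      have h1 : e₂ - 1 + 1 = e₂ := Nat.succ_pred_eq_of_pos he₂
      calc ℓ * (e₂ - 1) + ℓ = ℓ * (e₂ - 1 + 1) := by ring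
        _ = ℓ * e₂ := by rw [h1]
    have hbℓ : ℓ₂ + ℓ * (e₂ - 1) + ℓ = ℓ₂ + ℓ * e₂ := by rw [Nat.add_assoc, hmul2]
    have c2 : ℓ₂ + ℓ * (e₂ - 1) + ℓ ≡ ℓ₂ [MOD Nat.gcd e₁ e₂] := by
      rw [hbℓ]
      have hdvd2 : Nat.gcd e₁ e₂ ∣ ℓ * e₂ :=
        Dvd.dvd.mul_left (Nat.gcd_dvd_right e₁ e₂) ℓ
      have h6 := (Nat.ModEq.refl ℓ₂).add (Nat.modEq_zero_iff_dvd.mpr hdvd2)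
      rwa [Nat.add_zero] at h6
    have c2' : ℓ₂ + ℓ * (e₂ - 1) + ℓ ≡ ℓ₂ [MOD e₂] := by
      rw [hbℓ]
      have hdvd2 : e₂ ∣ ℓ * e₂ := dvd_mul_left e₂ ℓ
      have h6 := (Nat.ModEq.refl ℓ₂).add (Nat.modEq_zero_iff_dvd.mpr hdvd2)
      rwa [Nat.add_zero] at h6
    have c3 : ℓ₁ ≡ ℓ₂ + ℓ * (e₂ - 1) [MOD Nat.gcd e₁ e₂] := by
      have h5 : ℓ₁ + ℓ ≡ ℓ₂ + ℓ * (e₂ - 1) + ℓ [MOD Nat.gcd e₁ e₂] := by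
        rw [Nat.add_comm ℓ₁ ℓ]
        exact c1.trans c2.symm
      exact Nat.ModEq.add_right_cancel' ℓ h5
    obtain ⟨k, hk1, hk2⟩ := Nat.chineseRemainder' c3
    have hk3 : k + ℓ ≡ ℓ₂ [MOD e₂] := (hk2.add_right ℓ).trans c2'
    refine ⟨ℓ, hℓ, k, ?_⟩
    have E1 : (shiftL F ^ ℓ₁) u₁ = (shiftL F ^ k) u₁ :=
      shift_eq_of_modEq hp₁.2.1 hk1.symm
    have E2 : (shiftL F ^ ℓ₂) u₂ = (shiftL F ^ (k + ℓ)) u₂ :=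
      shift_eq_of_modEq hp₂.2.1 hk3.symm
    rw [map_add, ← Module.End.mul_apply, ← pow_add, ← E1, ← E2]
  -- Part 5
  have hgle : Nat.gcd e₁ e₂ ≤ e₂ := Nat.le_of_dvd he₂ (Nat.gcd_dvd_right e₁ e₂)
  have P1' : ∀ ℓ : ℕ, IsLeastPeriod (u₁ + (shiftL F ^ ℓ) u₂) (Nat.lcm e₁ e₂) := by
    intro ℓ
    have := P1 0 ℓ
    rwa [pow_zero, Module.End.one_apply] at this
  have hset : {C : Set (ℕ → F) | ∃ ℓ₁ < e₁, ∃ ℓ₂ < e₂,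
      C = seqCycle ((shiftL F ^ ℓ₁) u₁ + (shiftL F ^ ℓ₂) u₂)}
      = (fun ℓ => seqCycle (u₁ + (shiftL F ^ ℓ) u₂)) '' (Set.Iio (Nat.gcd e₁ e₂)) := by
    ext C
    simp only [Set.mem_setOf_eq, Set.mem_image, Set.mem_Iio]
    constructor
    · rintro ⟨ℓ₁, h1, ℓ₂, h2, rfl⟩
      obtain ⟨ℓ, hℓ, k, hk⟩ := P4 ℓ₁ ℓ₂
      refine ⟨ℓ, hℓ, ?_⟩
      rw [hk]
      exact (seqCycle_shift (P1' ℓ).1 (P1' ℓ).2.1 k).symm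
    · rintro ⟨ℓ, hℓ, rfl⟩
      exact ⟨0, he₁, ℓ, lt_of_lt_of_le hℓ hgle, by rw [pow_zero, Module.End.one_apply]⟩
  have hinj : Set.InjOn (fun ℓ => seqCycle (u₁ + (shiftL F ^ ℓ) u₂))
      (Set.Iio (Nat.gcd e₁ e₂)) := by
    intro ℓ hℓ ℓ' hℓ' hC
    by_contra hne'
    apply P3 ℓ hℓ ℓ' hℓ' hne'
    have hmem : (u₁ + (shiftL F ^ ℓ') u₂) ∈ seqCycle (u₁ + (shiftL F ^ ℓ') u₂) :=
      ⟨0, by rw [pow_zero, Module.End.one_apply]⟩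
    simp only at hC
    rw [← hC] at hmem
    exact hmem
  refine ⟨P1, P2, P3, P4, ?_⟩
  rw [hset, Set.ncard_image_of_injOn hinj, ← Finset.coe_range, Set.ncard_coe_finset,
    Finset.card_range]
end
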